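/- arXiv:2011.02060 — 5 statements merged into one kernel-verified Lean document; each statement's English description precedes it below -/
import Mathlib

section
/- Let ν = (439/18144)^{1/4} and s = 9ν²/2. There exists n₀ ∈ ℕ such that for all n ≥ n₀ and all integers r with 1 ≤ r ≤ n/2, one has s^r · C(n−r−1, r−1) ≤ s^{r*} · C(n−r*−1, r*−1), where r* = ⌈n/2 − (2s+1+√Π)/(8s+2)⌉ with Π = (4s+1)·n·(n−2) + (2s+1)². -/
/-!
With `f r = s ^ r * C(n - r - 1, r - 1)`, the binomial identity
`r (n - r - 1) C(n - r - 2, r) = (n - 2r)(n - 2r - 1) C(n - r - 1, r - 1)` gives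
`f (r + 1) / f r = s (n - 2r)(n - 2r - 1) / (r (n - r - 1))`. So `f` grows from `r` to `r + 1`
exactly when the quadratic `s (n - 2x)(n - 2x - 1) - x (n - x - 1)` is nonnegative at `x = r`.
Its roots are `n/2 - (2s + 1 ∓ √Π)/(8s + 2)`; the larger one is at least `n/2`, so on
`1 ≤ r ≤ n/2` the weight increases up to the smaller root `ρ` and decreases after it,
and its maximum is at `⌈ρ⌉ = r*`.
-/

/-- `r*(n) = ⌈n/2 − (2s+1+√Π)/(8s+2)⌉` where `Π = (4s+1)n(n−2) + (2s+1)²`. -/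
noncomputable def rstar (s : ℝ) (n : ℕ) : ℕ :=
  (⌈(n : ℝ) / 2 -
      (2 * s + 1 + Real.sqrt ((4 * s + 1) * n * (n - 2) + (2 * s + 1) ^ 2)) /
        (8 * s + 2)⌉).toNat

/-- The paper's constant `s = 9ν²/2` with `ν = (439/18144)^{1/4}`. -/
noncomputable def sPaper : ℝ := 9 * ((439 / 18144 : ℝ) ^ ((1 : ℝ) / 4)) ^ 2 / 2

theorem Nat.add_one_mul_add_one_mul_choose_succ (m k : ℕ) :
    (k + 1) * (m + 1) * m.choose (k + 1) = (m - k) * (m + 1 - k) * (m + 1).choose k := by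
  calc (k + 1) * (m + 1) * m.choose (k + 1) = (m + 1) * (m.choose (k + 1) * (k + 1)) := by ring
    _ = (m - k) * (m.choose k * (m + 1)) := by rw [Nat.choose_succ_right_eq]; ring
    _ = (m - k) * (m + 1 - k) * (m + 1).choose k := by rw [Nat.choose_mul_succ_eq]; ring

noncomputable def pathWeight (s : ℝ) (n r : ℕ) : ℝ := s ^ r * (n - r - 1).choose (r - 1)

theorem pathWeight_succ_ratio (s : ℝ) {n r : ℕ} (hr : 1 ≤ r) (hrn : 2 * r + 2 ≤ n) :
    (r * (n - r - 1) : ℝ) * pathWeight s n (r + 1) =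
      s * ((n - 2 * r) * (n - 2 * r - 1)) * pathWeight s n r := by
  obtain ⟨k, rfl⟩ : ∃ k, r = k + 1 := ⟨r - 1, by omega⟩
  obtain ⟨a, rfl⟩ : ∃ a, n = 2 * k + a + 4 := ⟨n - 2 * k - 4, by omega⟩
  have key := Nat.add_one_mul_add_one_mul_choose_succ (k + a + 1) k
  simp only [show k + a + 1 - k = a + 1 by omega, show k + a + 1 + 1 - k = a + 2 by omega] at key
  simp only [pathWeight, show 2 * k + a + 4 - (k + 1 + 1) - 1 = k + a + 1 by omega,
    show 2 * k + a + 4 - (k + 1) - 1 = k + a + 1 + 1 by omega, Nat.add_sub_cancel]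
  have key' := congrArg (Nat.cast : ℕ → ℝ) key
  push_cast at key' ⊢
  linear_combination s ^ (k + 2) * key'

section Roots

variable {s : ℝ} {n : ℕ}

/-- `Π`, the discriminant of `x ↦ s (n - 2x)(n - 2x - 1) - x (n - x - 1)`. -/
noncomputable def discr (s : ℝ) (n : ℕ) : ℝ := (4 * s + 1) * n * (n - 2) + (2 * s + 1) ^ 2

noncomputable def lowerRoot (s : ℝ) (n : ℕ) : ℝ := n / 2 - (2 * s + 1 + √(discr s n)) / (8 * s + 2)

noncomputable def upperRoot (s : ℝ) (n : ℕ) : ℝ := n / 2 - (2 * s + 1 - √(discr s n)) / (8 * s + 2)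

theorem rstar_eq_toNat_ceil_lowerRoot (s : ℝ) (n : ℕ) : rstar s n = ⌈lowerRoot s n⌉.toNat := rfl

theorem sq_add_one_le_discr (hs : 0 ≤ s) (hn : 2 ≤ n) : (2 * s + 1) ^ 2 ≤ discr s n := by
  have hn' : (2 : ℝ) ≤ n := by exact_mod_cast hn
  have : 0 ≤ (4 * s + 1) * n * (n - 2) := by
    apply mul_nonneg <;> [positivity; linarith]
  unfold discr
  linarith

theorem add_one_le_sqrt_discr (hs : 0 ≤ s) (hn : 2 ≤ n) : 2 * s + 1 ≤ √(discr s n) :=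
  Real.le_sqrt_of_sq_le (sq_add_one_le_discr hs hn)

theorem quadratic_eq_mul_sub_lowerRoot_mul_sub_upperRoot (hs : 0 ≤ s) (hn : 2 ≤ n) (x : ℝ) :
    s * ((n - 2 * x) * (n - 2 * x - 1)) - x * (n - x - 1) =
      (4 * s + 1) * (x - lowerRoot s n) * (x - upperRoot s n) := by
  have hq : √(discr s n) ^ 2 = discr s n :=
    Real.sq_sqrt ((sq_nonneg _).trans (sq_add_one_le_discr hs hn))
  unfold lowerRoot upperRoot
  generalize √(discr s n) = q at hq
  unfold discr at hq
  field_simp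
  linear_combination (16 * s + 4) * hq

theorem lowerRoot_le (hs : 0 ≤ s) (hn : 2 ≤ n) : lowerRoot s n ≤ (n - 1) / 2 := by
  have hq := add_one_le_sqrt_discr hs hn
  unfold lowerRoot
  have : 1 / 2 ≤ (2 * s + 1 + √(discr s n)) / (8 * s + 2) := by
    rw [le_div_iff₀ (by linarith)]; linarith
  linarith

theorem le_upperRoot (hs : 0 ≤ s) (hn : 2 ≤ n) : (n : ℝ) / 2 ≤ upperRoot s n := by
  have hq := add_one_le_sqrt_discr hs hn
  unfold upperRoot
  have : (2 * s + 1 - √(discr s n)) / (8 * s + 2) ≤ 0 :=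
    div_nonpos_of_nonpos_of_nonneg (by linarith) (by linarith)
  linarith

theorem lowerRoot_pos (hs : 0 < s) (hn : 2 ≤ n) : 0 < lowerRoot s n := by
  have hn' : (2 : ℝ) ≤ n := by exact_mod_cast hn
  have hup : 0 < upperRoot s n := by linarith [le_upperRoot hs.le hn]
  have hgap : 0 < (4 * s + 1) * upperRoot s n * lowerRoot s n := by
    have h0 := quadratic_eq_mul_sub_lowerRoot_mul_sub_upperRoot hs.le hn 0
    have : 0 < s * (n * (n - 1)) := by apply mul_pos hs; apply mul_pos <;> linarith
    linarith
  exact pos_of_mul_pos_right hgap (by positivity)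

end Roots

section Unimodal

variable {s : ℝ} {n : ℕ}

theorem pathWeight_nonneg (hs : 0 ≤ s) (n r : ℕ) : 0 ≤ pathWeight s n r := by
  unfold pathWeight; positivity

theorem pathWeight_le_succ (hs : 0 ≤ s) {r : ℕ} (hr : 1 ≤ r) (hrn : 2 * r + 2 ≤ n)
    (hρ : r ≤ lowerRoot s n) : pathWeight s n r ≤ pathWeight s n (r + 1) := by
  have hrn' : (2 * r + 2 : ℝ) ≤ n := by exact_mod_cast hrn
  have hr' : (1 : ℝ) ≤ r := by exact_mod_cast hr
  have hpos : (0 : ℝ) < r * (n - r - 1) := by apply mul_pos <;> linarith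
  have hgap : 0 ≤ s * ((n - 2 * r) * (n - 2 * r - 1)) - r * (n - r - 1) := by
    rw [quadratic_eq_mul_sub_lowerRoot_mul_sub_upperRoot hs (by omega)]
    have := lowerRoot_le hs (n := n) (by omega)
    have := le_upperRoot hs (n := n) (by omega)
    apply mul_nonneg_of_nonpos_of_nonpos
    · apply mul_nonpos_of_nonneg_of_nonpos <;> linarith
    · linarith
  refine le_of_mul_le_mul_left ?_ hpos
  rw [pathWeight_succ_ratio s hr hrn]
  exact mul_le_mul_of_nonneg_right (by linarith) (pathWeight_nonneg hs n r)

theorem pathWeight_succ_le (hs : 0 ≤ s) {r : ℕ} (hr : 1 ≤ r) (hrn : 2 * r + 2 ≤ n)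
    (hρ : lowerRoot s n ≤ r) : pathWeight s n (r + 1) ≤ pathWeight s n r := by
  have hrn' : (2 * r + 2 : ℝ) ≤ n := by exact_mod_cast hrn
  have hr' : (1 : ℝ) ≤ r := by exact_mod_cast hr
  have hpos : (0 : ℝ) < r * (n - r - 1) := by apply mul_pos <;> linarith
  have hgap : s * ((n - 2 * r) * (n - 2 * r - 1)) - r * (n - r - 1) ≤ 0 := by
    rw [quadratic_eq_mul_sub_lowerRoot_mul_sub_upperRoot hs (by omega)]
    have := le_upperRoot hs (n := n) (by omega)
    apply mul_nonpos_of_nonneg_of_nonpos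
    · apply mul_nonneg <;> linarith
    · linarith
  refine le_of_mul_le_mul_left ?_ hpos
  rw [pathWeight_succ_ratio s hr hrn]
  exact mul_le_mul_of_nonneg_right (by linarith) (pathWeight_nonneg hs n r)

theorem one_le_rstar (hs : 0 < s) (hn : 2 ≤ n) : 1 ≤ rstar s n := by
  have := Int.lt_ceil.mpr (by exact_mod_cast lowerRoot_pos hs hn : ((0 : ℤ) : ℝ) < lowerRoot s n)
  rw [rstar_eq_toNat_ceil_lowerRoot]
  omega

theorem two_mul_rstar_le (hs : 0 ≤ s) (hn : 2 ≤ n) : 2 * rstar s n ≤ n := by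
  have h := lowerRoot_le hs hn
  have hc := Int.ceil_lt_add_one (lowerRoot s n)
  have : 2 * ⌈lowerRoot s n⌉ < (n : ℤ) + 1 := by
    have : ((2 * ⌈lowerRoot s n⌉ : ℤ) : ℝ) < ((n + 1 : ℤ) : ℝ) := by push_cast; linarith
    exact_mod_cast this
  rw [rstar_eq_toNat_ceil_lowerRoot]
  omega

theorem monotoneOn_pathWeight (hs : 0 < s) (hn : 2 ≤ n) :
    MonotoneOn (pathWeight s n) (Set.Icc 1 (rstar s n)) := by
  refine monotoneOn_of_le_succ Set.ordConnected_Icc fun r _ hr hr1 => ?_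
  rw [Order.succ_eq_add_one] at hr1 ⊢
  have hlt : r < rstar s n := hr1.2
  have := two_mul_rstar_le hs.le hn
  refine pathWeight_le_succ hs.le hr.1 (by omega) ?_
  rw [rstar_eq_toNat_ceil_lowerRoot, Int.lt_toNat, Int.lt_ceil] at hlt
  exact_mod_cast hlt.le

theorem antitoneOn_pathWeight (hs : 0 < s) (hn : 2 ≤ n) :
    AntitoneOn (pathWeight s n) (Set.Icc (rstar s n) (n / 2)) := by
  refine antitoneOn_of_succ_le Set.ordConnected_Icc fun r _ hr hr1 => ?_
  rw [Order.succ_eq_add_one] at hr1 ⊢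
  have hle : rstar s n ≤ r := hr.1
  have hrn : r + 1 ≤ n / 2 := hr1.2
  have := one_le_rstar hs hn
  refine pathWeight_succ_le hs.le (by omega) (by omega) ?_
  rw [rstar_eq_toNat_ceil_lowerRoot, Int.toNat_le, Int.ceil_le] at hle
  exact_mod_cast hle

theorem pathWeight_le_pathWeight_rstar (hs : 0 < s) {r : ℕ} (hr : 1 ≤ r) (hrn : 2 * r ≤ n) :
    pathWeight s n r ≤ pathWeight s n (rstar s n) := by
  have hn : 2 ≤ n := by omega
  have h1 := one_le_rstar hs hn
  have h2 := two_mul_rstar_le hs.le hn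
  rcases le_total r (rstar s n) with h | h
  · exact monotoneOn_pathWeight hs hn ⟨hr, h⟩ ⟨h1, le_rfl⟩ h
  · have hr2 : r ≤ n / 2 := by omega
    have hs2 : rstar s n ≤ n / 2 := by omega
    exact antitoneOn_pathWeight hs hn ⟨le_rfl, hs2⟩ ⟨h, hr2⟩ h

end Unimodal

theorem sPaper_pos : 0 < sPaper := by
  unfold sPaper; positivity

/-- For all large `n`, the function `r ↦ s^r · C(n−r−1, r−1)` on `1 ≤ r ≤ n/2`
is maximized at `r = r*(n)`. -/
theorem stmt_6 :
    ∃ n₀ : ℕ, ∀ n : ℕ, n₀ ≤ n → ∀ r : ℕ, 1 ≤ r → 2 * r ≤ n →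
      sPaper ^ r * (Nat.choose (n - r - 1) (r - 1) : ℝ) ≤
        sPaper ^ (rstar sPaper n) *
          (Nat.choose (n - rstar sPaper n - 1) (rstar sPaper n - 1) : ℝ) :=
  ⟨0, fun _ _ _ hr hrn => pathWeight_le_pathWeight_rstar sPaper_pos hr hrn⟩
end

section
/- Fix s > 0 and c₄ > 0. For n ∈ ℕ let Π(n) = (4s+1)·n·(n−2) + (2s+1)² and r*(n) = ⌈n/2 − (2s+1+√Π(n))/(8s+2)⌉. Then lim_{n→∞} [ c₄ · (n−r*(n)−1)^{n−r*(n)−1} / ( (r*(n)−1)^{r*(n)−1} · (n−2r*(n))^{n−2r*(n)} ) · s^{r*(n)} ]^{1/n} = 1/2 + √(s + 1/4). -/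
open Filter Real Topology

lemma tendsto_atTop_of_tendsto_div_natCast {u : ℕ → ℝ} {L : ℝ} (hL : 0 < L)
    (hu : Tendsto (fun n => u n / n) atTop (𝓝 L)) : Tendsto u atTop atTop := by
  refine (hu.pos_mul_atTop hL tendsto_natCast_atTop_atTop).congr' ?_
  filter_upwards [eventually_ne_atTop 0] with n hn
  field_simp

lemma tendsto_natCeil_div_natCast {u : ℕ → ℝ} {L : ℝ} (hL : 0 < L)
    (hu : Tendsto (fun n => u n / n) atTop (𝓝 L)) :
    Tendsto (fun n => (⌈u n⌉₊ : ℝ) / n) atTop (𝓝 L) := by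
  have hu_top := tendsto_atTop_of_tendsto_div_natCast hL hu
  have := (tendsto_nat_ceil_div_atTop.comp hu_top).mul hu
  rw [one_mul] at this
  refine this.congr' ?_
  filter_upwards [hu_top.eventually_gt_atTop 0] with n hn
  simp only [Function.comp_apply]
  field_simp

lemma tendsto_sqrt_div_natCast {u : ℕ → ℝ} {a : ℝ}
    (hu : Tendsto (fun n => u n / (n : ℝ) ^ 2) atTop (𝓝 a)) :
    Tendsto (fun n => √(u n) / n) atTop (𝓝 √a) := by
  refine ((continuous_sqrt.tendsto a).comp hu).congr fun n => ?_
  simp only [Function.comp_apply]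
  rw [sqrt_div' _ (by positivity), sqrt_sq n.cast_nonneg]

section Asymptotics

noncomputable def stirlingTerm (s c₄ : ℝ) (n r : ℕ) : ℝ :=
  c₄ * ((n : ℝ) - r - 1) ^ (n - r - 1) /
    (((r : ℝ) - 1) ^ (r - 1) * ((n : ℝ) - 2 * r) ^ (n - 2 * r)) * s ^ r

noncomputable def growthExponent (s ρ : ℝ) : ℝ :=
  (1 - ρ) * log (1 - ρ) - ρ * log ρ - (1 - 2 * ρ) * log (1 - 2 * ρ) + ρ * log s

lemma mul_log_div_eq (x : ℝ) {n : ℝ} (hn : n ≠ 0) :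
    x / n * log (x / n) = (x * log x - x * log n) / n := by
  rcases eq_or_ne x 0 with rfl | hx
  · simp
  · rw [log_div hx hn]
    ring

lemma stirlingTerm_bases_pos {n r : ℕ} (hr : 2 ≤ r) (hrn : 2 * r + 1 ≤ n) :
    (0 : ℝ) < n - r - 1 ∧ (0 : ℝ) < r - 1 ∧ (0 : ℝ) < n - 2 * r := by
  have hr' : (2 : ℝ) ≤ r := by exact_mod_cast hr
  have hrn' : 2 * (r : ℝ) + 1 ≤ n := by exact_mod_cast hrn
  refine ⟨?_, ?_, ?_⟩ <;> linarith

variable {s c₄ : ℝ}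

lemma stirlingTerm_pos (hs : 0 < s) (hc₄ : 0 < c₄) {n r : ℕ} (hr : 2 ≤ r)
    (hrn : 2 * r + 1 ≤ n) : 0 < stirlingTerm s c₄ n r := by
  obtain ⟨ha, hb, hc⟩ := stirlingTerm_bases_pos hr hrn
  unfold stirlingTerm
  positivity

lemma log_stirlingTerm_div (hs : 0 < s) (hc₄ : 0 < c₄) {n r : ℕ} (hr : 2 ≤ r)
    (hrn : 2 * r + 1 ≤ n) :
    log (stirlingTerm s c₄ n r) / n =
      log c₄ * (1 / n)
        + (1 - r / n - 1 / n) * log (1 - r / n - 1 / n)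
        - (r / n - 1 / n) * log (r / n - 1 / n)
        - (1 - 2 * (r / n)) * log (1 - 2 * (r / n))
        + r / n * log s := by
  obtain ⟨ha, hb, hc⟩ := stirlingTerm_bases_pos hr hrn
  have hn : (n : ℝ) ≠ 0 := Nat.cast_ne_zero.mpr (by omega)
  have hA : 1 - (r : ℝ) / n - 1 / n = (n - r - 1) / n := by field_simp
  have hB : (r : ℝ) / n - 1 / n = (r - 1) / n := by field_simp
  have hC : 1 - 2 * ((r : ℝ) / n) = (n - 2 * r) / n := by field_simp
  rw [hA, hB, hC, mul_log_div_eq _ hn, mul_log_div_eq _ hn, mul_log_div_eq _ hn]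
  unfold stirlingTerm
  have ha' := (pow_pos ha (n - r - 1)).ne'
  have hb' := (pow_pos hb (r - 1)).ne'
  have hc' := (pow_pos hc (n - 2 * r)).ne'
  rw [log_mul (by simp [hc₄.ne', ha', hb', hc']) (pow_pos hs r).ne',
    log_div (mul_ne_zero hc₄.ne' ha') (mul_ne_zero hb' hc'), log_mul hc₄.ne' ha', log_mul hb' hc',
    log_pow, log_pow, log_pow, log_pow]
  push_cast [Nat.cast_sub (show 1 ≤ n - r by omega), Nat.cast_sub (show r ≤ n by omega),
    Nat.cast_sub (show 1 ≤ r by omega), Nat.cast_sub (show 2 * r ≤ n by omega)]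
  field_simp
  ring

theorem tendsto_stirlingTerm_rpow (hs : 0 < s) (hc₄ : 0 < c₄) {ρ : ℝ} (hρ₀ : 0 < ρ)
    (hρ : ρ < 1 / 2) {r : ℕ → ℕ} (hr : Tendsto (fun n => (r n : ℝ) / n) atTop (𝓝 ρ)) :
    Tendsto (fun n : ℕ => stirlingTerm s c₄ n (r n) ^ ((1 : ℝ) / n)) atTop
      (𝓝 (exp (growthExponent s ρ))) := by
  have hr₂ : ∀ᶠ n in atTop, 2 ≤ r n := by
    have := (tendsto_atTop_of_tendsto_div_natCast hρ₀ hr).eventually_ge_atTop 2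
    filter_upwards [this] with n hn
    exact_mod_cast hn
  have hrn : ∀ᶠ n in atTop, 2 * r n + 1 ≤ n := by
    have hlim : Tendsto (fun n : ℕ => ((n : ℝ) - 2 * r n) / n) atTop (𝓝 (1 - 2 * ρ)) := by
      refine (tendsto_const_nhds.sub (hr.const_mul 2)).congr' ?_
      filter_upwards [eventually_ne_atTop 0] with n hn
      field_simp
    have := (tendsto_atTop_of_tendsto_div_natCast (by linarith) hlim).eventually_ge_atTop 1
    filter_upwards [this] with n hn
    exact_mod_cast (by linarith : 2 * (r n : ℝ) + 1 ≤ n)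
  have h₀ : Tendsto (fun n : ℕ => (1 : ℝ) / n) atTop (𝓝 0) :=
    tendsto_const_div_atTop_nhds_zero_nat 1
  have hφ {u : ℕ → ℝ} {L : ℝ} (hu : Tendsto u atTop (𝓝 L)) :
      Tendsto (fun n => u n * log (u n)) atTop (𝓝 (L * log L)) :=
    (continuous_mul_log.tendsto L).comp hu
  have h₁ : Tendsto (fun _ : ℕ => (1 : ℝ)) atTop (𝓝 1) := tendsto_const_nhds
  have hlog := ((((h₀.const_mul (log c₄)).add (hφ ((h₁.sub hr).sub h₀))).sub
    (hφ (hr.sub h₀))).sub (hφ (h₁.sub (hr.const_mul 2)))).add (hr.mul_const (log s))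
  simp only [mul_zero, sub_zero, zero_add] at hlog
  refine ((continuous_exp.tendsto _).comp hlog).congr' ?_
  filter_upwards [hr₂, hrn] with n hr₂ hrn
  rw [Function.comp_apply, ← log_stirlingTerm_div hs hc₄ hr₂ hrn,
    rpow_def_of_pos (stirlingTerm_pos hs hc₄ hr₂ hrn), mul_one_div]

end Asymptotics

/-- With `q² = 4s + 1` the densities `ρ, 1 - ρ, 1 - 2ρ` and `s` are `(q ∓ 1)/(2q)`, `1/q` and
`(q - 1)(q + 1)/4`, and the exponent collapses to `log ((q + 1)/2)`. -/
lemma growthExponent_eq_log {s q : ℝ} (hq : 1 < q) (hs : 4 * s + 1 = q ^ 2) :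
    growthExponent s (1 / 2 - 1 / (2 * q)) = log ((q + 1) / 2) := by
  obtain rfl : s = (q - 1) * (q + 1) / 4 := by linear_combination hs / 4
  have hq₀ : q ≠ 0 := by linarith
  have hqm : q - 1 ≠ 0 := by linarith
  have hqp : q + 1 ≠ 0 := by linarith
  have hρ : 1 / 2 - 1 / (2 * q) = (q - 1) / (2 * q) := by field_simp
  have h₁ : 1 - (q - 1) / (2 * q) = (q + 1) / (2 * q) := by field_simp; ring
  have h₂ : 1 - 2 * ((q - 1) / (2 * q)) = q⁻¹ := by field_simp; ring
  unfold growthExponent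
  rw [hρ, h₁, h₂, log_inv, log_div hqm (by positivity), log_div hqp (by positivity),
    log_div (mul_ne_zero hqm hqp) (by norm_num), log_div hqp (by norm_num), log_mul hqm hqp,
    log_mul two_ne_zero hq₀, show (4 : ℝ) = 2 * 2 by norm_num, log_mul two_ne_zero two_ne_zero]
  field_simp
  ring

section Rstar

variable {s : ℝ}

noncomputable def rstarDensity (s : ℝ) : ℝ := 1 / 2 - 1 / (2 * √(4 * s + 1))

lemma one_lt_sqrt_four_mul_add_one (hs : 0 < s) : 1 < √(4 * s + 1) :=
  lt_sqrt_of_sq_lt (by linarith)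

lemma rstarDensity_pos (hs : 0 < s) : 0 < rstarDensity s := by
  have hq := one_lt_sqrt_four_mul_add_one hs
  have : 1 / (2 * √(4 * s + 1)) < 1 / 2 := by gcongr; linarith
  unfold rstarDensity
  linarith

lemma rstarDensity_lt_half (hs : 0 < s) : rstarDensity s < 1 / 2 := by
  have : 0 < 1 / (2 * √(4 * s + 1)) := by positivity
  unfold rstarDensity
  linarith

lemma tendsto_rstar_div (hs : 0 < s) :
    Tendsto (fun n => (rstar s n : ℝ) / n) atTop (𝓝 (rstarDensity s)) := by
  have h₀ : Tendsto (fun n : ℕ => (1 : ℝ) / n) atTop (𝓝 0) :=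
    tendsto_const_div_atTop_nhds_zero_nat 1
  have hP : Tendsto (fun n : ℕ => ((4 * s + 1) * n * (n - 2) + (2 * s + 1) ^ 2) / (n : ℝ) ^ 2)
      atTop (𝓝 (4 * s + 1)) := by
    have := ((h₀.const_mul 2).const_sub 1 |>.const_mul (4 * s + 1)).add
      ((h₀.pow 2).const_mul ((2 * s + 1) ^ 2))
    simp only [mul_zero, sub_zero, mul_one, add_zero, ne_eq, OfNat.ofNat_ne_zero,
      not_false_eq_true, zero_pow] at this
    refine this.congr' ?_
    filter_upwards [eventually_ne_atTop 0] with n hn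
    field_simp
  have hg := ((h₀.const_mul ((2 * s + 1) / (8 * s + 2))).const_sub (1 / 2)).sub
    ((tendsto_sqrt_div_natCast hP).div_const (8 * s + 2))
  have hlim : 1 / 2 - (2 * s + 1) / (8 * s + 2) * 0 - √(4 * s + 1) / (8 * s + 2)
      = rstarDensity s := by
    have hq2 : √(4 * s + 1) ^ 2 = 4 * s + 1 := sq_sqrt (by linarith)
    rw [show 8 * s + 2 = 2 * √(4 * s + 1) ^ 2 by rw [hq2]; ring]
    unfold rstarDensity
    field_simp
    ring
  rw [hlim] at hg
  refine (tendsto_natCeil_div_natCast (rstarDensity_pos hs) (hg.congr' ?_)).congr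
    fun n => by rw [rstar, Int.ceil_toNat]
  filter_upwards [eventually_ne_atTop 0] with n hn
  field_simp
  ring

lemma exp_growthExponent_rstarDensity (hs : 0 < s) :
    exp (growthExponent s (rstarDensity s)) = 1 / 2 + √(s + 1 / 4) := by
  have hq := one_lt_sqrt_four_mul_add_one hs
  have hsqrt : √(s + 1 / 4) = √(4 * s + 1) / 2 := by
    rw [show s + 1 / 4 = (4 * s + 1) / 2 ^ 2 by ring, sqrt_div' _ (by norm_num), sqrt_sq two_pos.le]
  rw [rstarDensity, growthExponent_eq_log hq (sq_sqrt (by linarith)).symm, exp_log (by positivity),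
    hsqrt]
  ring

end Rstar

/-- The Stirling-type limit:
`[c₄ (n−r*−1)^{n−r*−1} / ((r*−1)^{r*−1} (n−2r*)^{n−2r*}) · s^{r*}]^{1/n} → 1/2 + √(s+1/4)`. -/
theorem stmt_7 (s c₄ : ℝ) (hs : 0 < s) (hc₄ : 0 < c₄) :
    Filter.Tendsto
      (fun n : ℕ =>
        (c₄ * ((n : ℝ) - rstar s n - 1) ^ (n - rstar s n - 1) /
            (((rstar s n : ℝ) - 1) ^ (rstar s n - 1) *
              ((n : ℝ) - 2 * rstar s n) ^ (n - 2 * rstar s n)) *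
          s ^ (rstar s n)) ^ ((1 : ℝ) / n))
      Filter.atTop (nhds (1 / 2 + Real.sqrt (s + 1 / 4))) := by
  rw [← exp_growthExponent_rstarDensity hs]
  exact tendsto_stirlingTerm_rpow hs hc₄ (rstarDensity_pos hs) (rstarDensity_lt_half hs)
    (tendsto_rstar_div hs)
end

section
/- Fix s > 0 and set c₆ = 1/3 + (2/3)·√(s + 1/4) + 0.001. For n ∈ ℕ let Π(n) = (4s+1)·n·(n−2) + (2s+1)² and r*(n) = ⌈n/2 − (2s+1+√Π(n))/(8s+2)⌉. Then there exist n₀ ∈ ℕ and a constant c₅ > 0 such that for all n ≥ n₀, (2/3)^n · C(n−r*(n)−1, r*(n)−1) · s^{r*(n)} < c₅ · c₆^n. -/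
lemma key_binom (s x : ℝ) (hs : 0 ≤ s) (hx1 : 1 ≤ x) (hx : x ^ 2 = x + s) :
    ∀ a b : ℕ, (Nat.choose a b : ℝ) * s ^ b ≤ x ^ (a + b) := by
  intro a
  induction a with
  | zero =>
    intro b
    cases b with
    | zero => simp
    | succ b =>
      simp only [Nat.choose]
      have : (0 : ℝ) ≤ x ^ (0 + (b + 1)) := by positivity
      simpa using this
  | succ a ih =>
    intro b
    cases b with
    | zero =>
      have h1x : (1:ℝ) ≤ x ^ (a + 1) := one_le_pow₀ hx1
      simpa using h1x
    | succ b =>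
      have h1 := ih b
      have h2 := ih (b + 1)
      have hx0 : (0 : ℝ) < x := lt_of_lt_of_le one_pos hx1
      rw [Nat.choose_succ_succ]
      push_cast
      have heq : ((Nat.choose a b : ℝ) + (Nat.choose a (b + 1) : ℝ)) * s ^ (b + 1) =
          ((Nat.choose a b : ℝ) * s ^ b) * s + ((Nat.choose a (b + 1) : ℝ) * s ^ (b + 1)) := by
        ring
      rw [heq]
      have hstep : x ^ (a + b) * s + x ^ (a + (b + 1)) = x ^ (a + 1 + (b + 1)) := by
        have e1 : x ^ (a + 1 + (b + 1)) = x ^ (a + b) * x ^ 2 := by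
          rw [← pow_add]; ring_nf
        have e2 : x ^ (a + (b + 1)) = x ^ (a + b) * x := by
          rw [show a + (b + 1) = (a + b) + 1 by omega, pow_succ]
        rw [e1, e2, hx]; ring
      calc ((Nat.choose a b : ℝ) * s ^ b) * s + ((Nat.choose a (b + 1) : ℝ) * s ^ (b + 1))
          ≤ x ^ (a + b) * s + x ^ (a + (b + 1)) := by
            gcongr
        _ = x ^ (a + 1 + (b + 1)) := hstep

/-- For large `n`, `(2/3)^n C(n−r*−1, r*−1) s^{r*} < c₅ c₆^n` with
`c₆ = 1/3 + (2/3)√(s+1/4) + 0.001`. -/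
theorem stmt_9 (s : ℝ) (hs : 0 < s) :
    ∃ (n₀ : ℕ) (c₅ : ℝ), 0 < c₅ ∧ ∀ n : ℕ, n₀ ≤ n →
      (2 / 3 : ℝ) ^ n * (Nat.choose (n - rstar s n - 1) (rstar s n - 1) : ℝ) *
          s ^ (rstar s n) <
        c₅ * (1 / 3 + 2 / 3 * Real.sqrt (s + 1 / 4) + 0.001) ^ n := by
  set x : ℝ := (1 + Real.sqrt (1 + 4 * s)) / 2 with hxdef
  have h14 : (0 : ℝ) ≤ 1 + 4 * s := by linarith
  have hsq : Real.sqrt (1 + 4 * s) ^ 2 = 1 + 4 * s := Real.sq_sqrt h14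
  have hsge : (1 : ℝ) ≤ Real.sqrt (1 + 4 * s) := by
    nlinarith [Real.sqrt_nonneg (1 + 4 * s)]
  have hx1 : (1 : ℝ) ≤ x := by rw [hxdef]; linarith
  have hx : x ^ 2 = x + s := by rw [hxdef]; nlinarith
  -- sqrt(1+4s) = 2 * sqrt(s+1/4)
  have hsqrt2 : Real.sqrt (1 + 4 * s) = 2 * Real.sqrt (s + 1 / 4) := by
    rw [show (1 + 4 * s : ℝ) = 4 * (s + 1 / 4) by ring,
        Real.sqrt_mul (by norm_num : (0:ℝ) ≤ 4),
        show (4 : ℝ) = 2 ^ 2 by norm_num, Real.sqrt_sq (by norm_num : (0:ℝ) ≤ 2)]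
  set c₆ : ℝ := 1 / 3 + 2 / 3 * Real.sqrt (s + 1 / 4) + 0.001 with hc6
  have hyx : (2 / 3 : ℝ) * x = 1 / 3 + 2 / 3 * Real.sqrt (s + 1 / 4) := by
    rw [hxdef, hsqrt2]; ring
  have hy0 : (0 : ℝ) ≤ (2 / 3 : ℝ) * x := by positivity
  have hylt : (2 / 3 : ℝ) * x ≤ c₆ := by rw [hyx, hc6]; norm_num
  have hc60 : (0 : ℝ) < c₆ := by
    have := Real.sqrt_nonneg (s + 1 / 4)
    rw [hc6]; norm_num; linarith
  refine ⟨0, s + 2, by linarith, fun n _ => ?_⟩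
  set r := rstar s n
  by_cases hch : n - r - 1 < r - 1
  · rw [Nat.choose_eq_zero_of_lt hch]
    have : (0:ℝ) < (s + 2) * c₆ ^ n := by positivity
    simpa using this
  push_neg at hch
  have hC := key_binom s x hs.le hx1 hx (n - r - 1) (r - 1)
  have hCx : (Nat.choose (n - r - 1) (r - 1) : ℝ) * s ^ (r - 1) ≤ x ^ n := by
    refine hC.trans (pow_le_pow_right₀ hx1 (by omega))
  have hsr : s ^ r ≤ (s + 1) * s ^ (r - 1) := by
    cases r with
    | zero => simp; linarith
    | succ m =>
      simp only [Nat.succ_sub_one, pow_succ]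
      nlinarith [pow_nonneg hs.le m]
  have hCnn : (0 : ℝ) ≤ (Nat.choose (n - r - 1) (r - 1) : ℝ) := Nat.cast_nonneg _
  have step1 : (2 / 3 : ℝ) ^ n * (Nat.choose (n - r - 1) (r - 1) : ℝ) * s ^ r
      ≤ (s + 1) * ((2 / 3) * x) ^ n := by
    have h1 : (Nat.choose (n - r - 1) (r - 1) : ℝ) * s ^ r
        ≤ (s + 1) * x ^ n := by
      calc (Nat.choose (n - r - 1) (r - 1) : ℝ) * s ^ r
          ≤ (Nat.choose (n - r - 1) (r - 1) : ℝ) * ((s + 1) * s ^ (r - 1)) := by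
            exact mul_le_mul_of_nonneg_left hsr hCnn
        _ = (s + 1) * ((Nat.choose (n - r - 1) (r - 1) : ℝ) * s ^ (r - 1)) := by ring
        _ ≤ (s + 1) * x ^ n := by
            exact mul_le_mul_of_nonneg_left hCx (by linarith)
    calc (2 / 3 : ℝ) ^ n * (Nat.choose (n - r - 1) (r - 1) : ℝ) * s ^ r
        = (2 / 3 : ℝ) ^ n * ((Nat.choose (n - r - 1) (r - 1) : ℝ) * s ^ r) := by ring
      _ ≤ (2 / 3 : ℝ) ^ n * ((s + 1) * x ^ n) := by
          exact mul_le_mul_of_nonneg_left h1 (by positivity)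
      _ = (s + 1) * ((2 / 3) * x) ^ n := by rw [mul_pow]; ring
  have step2 : (s + 1) * ((2 / 3 : ℝ) * x) ^ n ≤ (s + 1) * c₆ ^ n := by
    apply mul_le_mul_of_nonneg_left (pow_le_pow_left₀ hy0 hylt n) (by linarith)
  have step3 : (s + 1) * c₆ ^ n < (s + 2) * c₆ ^ n := by
    have : (0 : ℝ) < c₆ ^ n := pow_pos hc60 n
    nlinarith
  calc (2 / 3 : ℝ) ^ n * (Nat.choose (n - r - 1) (r - 1) : ℝ) * s ^ r
      ≤ (s + 1) * ((2 / 3) * x) ^ n := step1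
    _ ≤ (s + 1) * c₆ ^ n := step2
    _ < (s + 2) * c₆ ^ n := step3
end

section
/- Let L : ℕ → ℕ satisfy L₀ ≥ 25 and L_{k+1} = ⌊√(L_k)⌋ · L_k for all k ≥ 0. Then ∑_{k=0}^{∞} L_k^{−7/2} < 1. -/
/-! Once `L k ≥ 25`, the factor `⌊√(L k)⌋` is at least `5`, so the scales grow at least
geometrically: `L k ≥ 25 · 5 ^ k`. Since `L k ≥ 1`, each term `L k ^ (-7/2)` is at most
`(L k)⁻¹ ≤ 25⁻¹ · 5⁻¹ ^ k`, and the geometric series sums to `1/20 < 1`. -/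

theorem Nat.pow_add_two_le_of_sqrt_mul_rec {L : ℕ → ℕ} {n : ℕ} (h0 : n ^ 2 ≤ L 0)
    (hrec : ∀ k, L (k + 1) = Nat.sqrt (L k) * L k) (k : ℕ) : n ^ (k + 2) ≤ L k := by
  induction k with
  | zero => simpa using h0
  | succ k ih =>
    have hsq : n ^ 2 ≤ L k := by
      rcases Nat.eq_zero_or_pos n with rfl | hn
      · simp
      · exact (Nat.pow_le_pow_right hn (by omega)).trans ih
    have hsqrt : n ≤ Nat.sqrt (L k) := Nat.le_sqrt'.mpr hsq
    calc n ^ (k + 1 + 2) = n * n ^ (k + 2) := by ring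
      _ ≤ Nat.sqrt (L k) * L k := Nat.mul_le_mul hsqrt ih
      _ = L (k + 1) := (hrec k).symm

theorem Real.rpow_le_inv_of_one_le {x p : ℝ} (hx : 1 ≤ x) (hp : p ≤ -1) : x ^ p ≤ x⁻¹ := by
  simpa [Real.rpow_neg_one] using Real.rpow_le_rpow_of_exponent_le hx hp

/-- Peierls estimate: for the scales `L_{k+1} = ⌊√L_k⌋ · L_k` with `L₀ ≥ 25`,
`∑_k L_k^{−7/2} < 1`. -/
theorem stmt_13 (L : ℕ → ℕ) (hL0 : 25 ≤ L 0)
    (hrec : ∀ k, L (k + 1) = Nat.sqrt (L k) * L k) :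
    (∑' k : ℕ, (L k : ℝ) ^ (-(7 : ℝ) / 2)) < 1 := by
  have hgrowth (k : ℕ) : (25 : ℝ) * 5 ^ k ≤ L k := by
    have := Nat.pow_add_two_le_of_sqrt_mul_rec (n := 5) hL0 hrec k
    rw [pow_add, mul_comm] at this
    exact_mod_cast this
  have hterm (k : ℕ) : (L k : ℝ) ^ (-(7 : ℝ) / 2) ≤ 25⁻¹ * 5⁻¹ ^ k := by
    have hone : (1 : ℝ) ≤ L k :=
      (one_le_mul_of_one_le_of_one_le (by norm_num) (one_le_pow₀ (by norm_num))).trans (hgrowth k)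
    calc (L k : ℝ) ^ (-(7 : ℝ) / 2) ≤ (L k : ℝ)⁻¹ := Real.rpow_le_inv_of_one_le hone (by norm_num)
      _ ≤ (25 * 5 ^ k)⁻¹ := inv_anti₀ (by positivity) (hgrowth k)
      _ = 25⁻¹ * 5⁻¹ ^ k := by rw [mul_inv, inv_pow]
  have hgeom : HasSum (fun k : ℕ => (25 : ℝ)⁻¹ * 5⁻¹ ^ k) (25⁻¹ * (1 - 5⁻¹)⁻¹) :=
    (hasSum_geometric_of_lt_one (by norm_num) (by norm_num)).mul_left _
  have hsum : Summable fun k : ℕ => (L k : ℝ) ^ (-(7 : ℝ) / 2) :=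
    hgeom.summable.of_nonneg_of_le (fun k => by positivity) hterm
  calc (∑' k : ℕ, (L k : ℝ) ^ (-(7 : ℝ) / 2)) ≤ 25⁻¹ * (1 - 5⁻¹)⁻¹ :=
        hasSum_le hterm hsum.hasSum hgeom
    _ < 1 := by norm_num
end

section
/- Let ψ > 0 and c₃ > 0 be real numbers, and let L : ℕ → ℕ satisfy L_{k+1} = ⌊√(L_k)⌋ · L_k for all k ≥ 0. Fix k ≥ 0 and assume: (i) L_k · exp(−ψ·L_k) ≤ L_k^{−8}; (ii) 32·(20·c₃ + 1) ≤ L_k; and let a_k, a_{k+1} ≥ 0 be real numbers satisfying a_{k+1} ≤ 32·(L_{k+1}/L_k)²·( a_k² + 20·c₃·L_k·exp(−ψ·L_k) ). If a_k ≤ L_k^{−4}, then a_{k+1} ≤ L_{k+1}^{−4}. -/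
/-! The bound `a_k ≤ L_k⁻⁴` together with (i) makes both summands of `a_k² + 20 c₃ L_k e^{-ψ L_k}`
at most `L_k⁻⁸`, and (ii) absorbs the constant: `a_{k+1} ≤ L_k · s² · L_k⁻⁸` with `s = ⌊√L_k⌋`.
Since `L_{k+1} = s L_k` and `s² ≤ L_k`, this is at most `(s L_k)⁻⁴` because `s⁶ ≤ L_k³`. -/

lemma Real.rpow_neg_natCast_eq_inv_pow (x : ℝ) (m : ℕ) : x ^ (-(m : ℝ)) = (x ^ m)⁻¹ := by
  rw [Real.rpow_neg_natCast, zpow_neg, zpow_natCast]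

lemma mul_sq_div_pow_eight_le_inv {s n : ℝ} (hs : 0 ≤ s) (hn : 0 < n) (hsn : s ^ 2 ≤ n) :
    n * s ^ 2 / n ^ 8 ≤ ((s * n) ^ 4)⁻¹ := by
  obtain rfl | hs := hs.eq_or_lt
  · simp
  have hs6 : s ^ 6 ≤ n ^ 3 := by
    simpa only [← pow_mul] using pow_le_pow_left₀ (by positivity) hsn 3
  rw [div_le_iff₀ (by positivity), ← div_eq_inv_mul, le_div_iff₀ (by positivity)]
  nlinarith [mul_le_mul_of_nonneg_left hs6 (by positivity : (0 : ℝ) ≤ n ^ 5)]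

lemma le_inv_pow_of_scale_step {K D n s a b E : ℝ} (hK : 0 ≤ K) (hD : 0 ≤ D) (hn : 0 < n)
    (hs : 0 ≤ s) (hsn : s ^ 2 ≤ n) (hKD : K * (D + 1) ≤ n) (ha : 0 ≤ a) (hak : a ≤ (n ^ 4)⁻¹)
    (hE : E ≤ (n ^ 8)⁻¹) (hb : b ≤ K * s ^ 2 * (a ^ 2 + D * E)) :
    b ≤ ((s * n) ^ 4)⁻¹ := by
  have ha2 : a ^ 2 ≤ (n ^ 8)⁻¹ := by
    simpa only [← inv_pow, ← pow_mul] using pow_le_pow_left₀ ha hak 2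
  calc b ≤ K * s ^ 2 * ((n ^ 8)⁻¹ + D * (n ^ 8)⁻¹) := by
        refine hb.trans (mul_le_mul_of_nonneg_left ?_ (by positivity))
        gcongr
    _ = K * (D + 1) * s ^ 2 / n ^ 8 := by ring
    _ ≤ n * s ^ 2 / n ^ 8 := by gcongr
    _ ≤ ((s * n) ^ 4)⁻¹ := mul_sq_div_pow_eight_le_inv hs hn hsn

theorem stmt_14_general (ψ c₃ : ℝ) (hc₃ : 0 < c₃)
    (L : ℕ → ℕ) (hrec : ∀ k, L (k + 1) = Nat.sqrt (L k) * L k) (k : ℕ)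
    (h1 : (L k : ℝ) * Real.exp (-ψ * L k) ≤ (L k : ℝ) ^ (-(8 : ℝ)))
    (h2 : 32 * (20 * c₃ + 1) ≤ (L k : ℝ))
    (a b : ℝ) (ha : 0 ≤ a)
    (hab : b ≤ 32 * ((L (k + 1) : ℝ) / (L k : ℝ)) ^ 2 *
      (a ^ 2 + 20 * c₃ * (L k : ℝ) * Real.exp (-ψ * L k)))
    (hak : a ≤ (L k : ℝ) ^ (-(4 : ℝ))) :
    b ≤ (L (k + 1) : ℝ) ^ (-(4 : ℝ)) := by
  have hn : (0 : ℝ) < L k := lt_of_lt_of_le (by positivity) h2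
  have hs2 : ((Nat.sqrt (L k) : ℕ) : ℝ) ^ 2 ≤ L k := by exact_mod_cast Nat.sqrt_le' (L k)
  have hL : (L (k + 1) : ℝ) = Nat.sqrt (L k) * L k := by rw [hrec k]; push_cast; ring
  have hratio : (L (k + 1) : ℝ) / L k = Nat.sqrt (L k) := by
    rw [hL, mul_div_cancel_right₀ _ hn.ne']
  rw [hratio, mul_assoc (20 * c₃)] at hab
  simp only [show (-(4 : ℝ)) = -((4 : ℕ) : ℝ) by norm_num,
    show (-(8 : ℝ)) = -((8 : ℕ) : ℝ) by norm_num, Real.rpow_neg_natCast_eq_inv_pow, hL] at h1 hak ⊢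
  exact le_inv_pow_of_scale_step (by norm_num) (by positivity) hn (by positivity) hs2 h2 ha
    hak h1 hab

/-- Arithmetic content of the induction step of the renormalization scheme. -/
theorem stmt_14 (ψ c₃ : ℝ) (hψ : 0 < ψ) (hc₃ : 0 < c₃)
    (L : ℕ → ℕ) (hrec : ∀ k, L (k + 1) = Nat.sqrt (L k) * L k) (k : ℕ)
    (h1 : (L k : ℝ) * Real.exp (-ψ * L k) ≤ (L k : ℝ) ^ (-(8 : ℝ)))
    (h2 : 32 * (20 * c₃ + 1) ≤ (L k : ℝ))
    (a b : ℝ) (ha : 0 ≤ a) (hb : 0 ≤ b)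
    (hab : b ≤ 32 * ((L (k + 1) : ℝ) / (L k : ℝ)) ^ 2 *
      (a ^ 2 + 20 * c₃ * (L k : ℝ) * Real.exp (-ψ * L k)))
    (hak : a ≤ (L k : ℝ) ^ (-(4 : ℝ))) :
    b ≤ (L (k + 1) : ℝ) ^ (-(4 : ℝ)) :=
  stmt_14_general ψ c₃ hc₃ L hrec k h1 h2 a b ha hab hak
end
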